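/- Let M be Hermitian positive definite and δM Hermitian with η := ‖M^{-1/2} δM M^{-1/2}‖₂ < 1/2. If X̃ ∈ ℂ^{n×n} satisfies X̃*(M+δM)X̃ = I, then for any n×k submatrix X̃₁ of X̃ (columns), the matrix I − X̃₁* δM X̃₁ is positive definite and ‖(I − X̃₁* δM X̃₁)^{-1/2}‖₂ ≤ √(1−η)/√(1−2η). -/

import Mathlib

open Matrix
open scoped ComplexOrder

noncomputable def specNorm {n : Type*} [Fintype n] [DecidableEq n] (A : Matrix n n ℂ) : ℝ :=
  ‖Matrix.toEuclideanCLM (𝕜 := ℂ) A‖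

noncomputable def frobNorm {m k : Type*} [Fintype m] [Fintype k] (A : Matrix m k ℂ) : ℝ :=
  Real.sqrt (∑ i, ∑ j, ‖A i j‖ ^ 2)

noncomputable def psqrt {n : Type*} [Fintype n] [DecidableEq n] {A : Matrix n n ℂ}
    (hA : A.PosDef) : Matrix n n ℂ :=
  hA.posSemidef.1.eigenvectorUnitary.1 * diagonal ((↑) ∘ (√·) ∘ hA.posSemidef.1.eigenvalues) *
    (star hA.posSemidef.1.eigenvectorUnitary : Matrix n n ℂ)

/-!
Since `X̃₁*(M + δM)X̃₁ = I`, the matrix `B = I - X̃₁* δM X̃₁` equals `X̃₁* M X̃₁`, which is positive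
definite because `X̃₁` has the left inverse `X̃₁*(M + δM)`. Writing `z = M^{1/2} y` and
`W = M^{-1/2} δM M^{-1/2}`, one has `y*(M + δM)y = z*z + z*Wz ≤ (1 + η) y*My`; with `y = X̃₁v` this
reads `v*v ≤ (1 + η) v*Bv`, i.e. `B ≥ (1 + η)⁻¹ I`, so `‖B^{-1/2}‖₂ ≤ √(1 + η)`, which is at most
`√(1 - η) / √(1 - 2η)` because `(1 + η)(1 - 2η) ≤ 1 - η`.
-/

open scoped InnerProductSpace

section SquareRoot

variable {n : Type*} [Fintype n] [DecidableEq n] {A : Matrix n n ℂ}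

lemma psqrt_mul_self (hA : A.PosDef) : psqrt hA * psqrt hA = A := by
  have hD : diagonal (((↑) ∘ (√·) ∘ hA.posSemidef.1.eigenvalues : n → ℂ)) *
      diagonal ((↑) ∘ (√·) ∘ hA.posSemidef.1.eigenvalues) =
      diagonal (RCLike.ofReal ∘ hA.posSemidef.1.eigenvalues) := by
    rw [diagonal_mul_diagonal]
    congr 1
    funext i
    simp only [Function.comp_apply]
    rw [← Complex.ofReal_mul, Real.mul_self_sqrt (hA.posSemidef.eigenvalues_nonneg i)]
    rfl
  conv_rhs => rw [hA.posSemidef.1.spectral_theorem, Unitary.conjStarAlgAut_apply]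
  simp only [psqrt, Matrix.mul_assoc]
  rw [← Matrix.mul_assoc (star _ : Matrix n n ℂ) _ _, Unitary.coe_star_mul_self, Matrix.one_mul,
    ← Matrix.mul_assoc _ _ (star _ : Matrix n n ℂ), hD]

lemma isHermitian_psqrt (hA : A.PosDef) : (psqrt hA).IsHermitian := by
  have hs : ∀ g : n → ℝ, star (Complex.ofReal ∘ g) = Complex.ofReal ∘ g := fun g => by
    funext i; simp
  simp only [IsHermitian, psqrt, conjTranspose_mul, Matrix.mul_assoc, diagonal_conjTranspose,
    star_eq_conjTranspose, conjTranspose_conjTranspose, hs]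

lemma isUnit_det_psqrt (hA : A.PosDef) : IsUnit (psqrt hA).det := by
  have h : IsUnit ((psqrt hA).det * (psqrt hA).det) := by
    rw [← det_mul, psqrt_mul_self, ← isUnit_iff_isUnit_det]
    exact hA.isUnit
  exact isUnit_of_mul_isUnit_left h

end SquareRoot

section QuadraticForms

lemma star_dotProduct_conjTranspose_mul_mul_mulVec {m k α : Type*} [Fintype m] [Fintype k]
    [CommRing α] [StarRing α] (A : Matrix m m α) (C : Matrix m k α) (v : k → α) :
    star v ⬝ᵥ (Cᴴ * A * C) *ᵥ v = star (C *ᵥ v) ⬝ᵥ A *ᵥ (C *ᵥ v) := by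
  rw [star_mulVec, ← mulVec_mulVec, ← mulVec_mulVec, dotProduct_mulVec]

lemma conjTranspose_submatrix_mul_mul_submatrix {m k l α : Type*} [Fintype m] [CommRing α]
    [StarRing α] (X : Matrix m l α) (A : Matrix m m α) (f : k → l) :
    (X.submatrix id f)ᴴ * A * X.submatrix id f = (Xᴴ * A * X).submatrix f f := by
  ext i j
  simp [Matrix.mul_apply, Finset.sum_mul]

variable {n : Type*} [Fintype n]

lemma norm_toLp_sq (z : n → ℂ) : ‖WithLp.toLp 2 z‖ ^ 2 = (star z ⬝ᵥ z).re := by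
  rw [← @inner_self_eq_norm_sq ℂ, EuclideanSpace.inner_toLp_toLp, dotProduct_comm]
  rfl

variable [DecidableEq n]

lemma re_star_dotProduct_mulVec_le_specNorm_mul (A : Matrix n n ℂ) (z : n → ℂ) :
    (star z ⬝ᵥ A *ᵥ z).re ≤ specNorm A * (star z ⬝ᵥ z).re := by
  set T := toEuclideanCLM (𝕜 := ℂ) A
  have hT : ⟪WithLp.toLp 2 z, T (WithLp.toLp 2 z)⟫_ℂ = star z ⬝ᵥ A *ᵥ z := by
    rw [toEuclideanCLM_toLp, EuclideanSpace.inner_toLp_toLp, dotProduct_comm]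
  calc (star z ⬝ᵥ A *ᵥ z).re ≤ ‖⟪WithLp.toLp 2 z, T (WithLp.toLp 2 z)⟫_ℂ‖ :=
        hT ▸ Complex.re_le_norm _
    _ ≤ ‖WithLp.toLp 2 z‖ * (‖T‖ * ‖WithLp.toLp 2 z‖) :=
        (norm_inner_le_norm _ _).trans (by gcongr; exact T.le_opNorm _)
    _ = specNorm A * (star z ⬝ᵥ z).re := by rw [← norm_toLp_sq, specNorm]; ring

lemma re_star_dotProduct_add_mulVec_le {M : Matrix n n ℂ} (hM : M.PosDef) (δM : Matrix n n ℂ)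
    (y : n → ℂ) :
    (star y ⬝ᵥ (M + δM) *ᵥ y).re ≤
      (1 + specNorm ((psqrt hM)⁻¹ * δM * (psqrt hM)⁻¹)) * (star y ⬝ᵥ M *ᵥ y).re := by
  set R := psqrt hM
  set W := R⁻¹ * δM * R⁻¹
  have hR : Rᴴ = R := (isHermitian_psqrt hM).eq
  have hMR : M = Rᴴ * 1 * R := by rw [hR, Matrix.mul_one, psqrt_mul_self]
  have hδM : δM = Rᴴ * W * R := by
    have hu : IsUnit R.det := isUnit_det_psqrt hM
    rw [hR, ← Matrix.mul_assoc, ← Matrix.mul_assoc, mul_nonsing_inv _ hu, Matrix.one_mul,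
      Matrix.mul_assoc, nonsing_inv_mul _ hu, Matrix.mul_one]
  have hMz : star y ⬝ᵥ M *ᵥ y = star (R *ᵥ y) ⬝ᵥ R *ᵥ y := by
    rw [hMR, star_dotProduct_conjTranspose_mul_mul_mulVec, one_mulVec]
  have hW := re_star_dotProduct_mulVec_le_specNorm_mul W (R *ᵥ y)
  rw [add_mulVec, dotProduct_add, Complex.add_re, hMz, hδM,
    star_dotProduct_conjTranspose_mul_mul_mulVec]
  linarith

lemma specNorm_inv_psqrt_le {A : Matrix n n ℂ} (hA : A.PosDef) {c : ℝ} (hc : 0 ≤ c)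
    (h : ∀ v : n → ℂ, (star v ⬝ᵥ v).re ≤ c * (star v ⬝ᵥ A *ᵥ v).re) :
    specNorm (psqrt hA)⁻¹ ≤ √c := by
  set S := psqrt hA
  refine ContinuousLinearMap.opNorm_le_bound _ (by positivity) fun x => ?_
  set w := S⁻¹ *ᵥ x.ofLp
  have hSw : S *ᵥ w = x.ofLp := by
    rw [mulVec_mulVec, mul_nonsing_inv _ (isUnit_det_psqrt hA), one_mulVec]
  have hA' : A = Sᴴ * 1 * S := by rw [(isHermitian_psqrt hA).eq, Matrix.mul_one, psqrt_mul_self]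
  have hx : ‖x‖ ^ 2 = (star w ⬝ᵥ A *ᵥ w).re := by
    rw [hA', star_dotProduct_conjTranspose_mul_mul_mulVec, one_mulVec, hSw, ← norm_toLp_sq,
      WithLp.toLp_ofLp]
  have hsq : ‖WithLp.toLp 2 w‖ ^ 2 ≤ c * ‖x‖ ^ 2 := by
    rw [norm_toLp_sq, hx]
    exact h w
  calc ‖toEuclideanCLM (𝕜 := ℂ) S⁻¹ x‖ = ‖WithLp.toLp 2 w‖ := by
        rw [← toEuclideanCLM_toLp, WithLp.toLp_ofLp]
    _ = √(‖WithLp.toLp 2 w‖ ^ 2) := (Real.sqrt_sq (norm_nonneg _)).symm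
    _ ≤ √(c * ‖x‖ ^ 2) := Real.sqrt_le_sqrt hsq
    _ = √c * ‖x‖ := by rw [Real.sqrt_mul hc, Real.sqrt_sq (norm_nonneg _)]

end QuadraticForms

lemma sqrt_one_add_le_sqrt_one_sub_div_sqrt_one_sub_two_mul {η : ℝ} (h0 : 0 ≤ η)
    (h : η < 1 / 2) : √(1 + η) ≤ √(1 - η) / √(1 - 2 * η) := by
  rw [← Real.sqrt_div (by linarith)]
  refine Real.sqrt_le_sqrt ((le_div_iff₀ (by linarith)).2 ?_)
  nlinarith

theorem stmt_10_general {n kk : ℕ} (M δM : Matrix (Fin n) (Fin n) ℂ)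
    (hM : M.PosDef)
    (η : ℝ) (hη : η = specNorm ((psqrt hM)⁻¹ * δM * (psqrt hM)⁻¹)) (hhalf : η < 1 / 2)
    (Xt : Matrix (Fin n) (Fin n) ℂ) (hXt : Xtᴴ * (M + δM) * Xt = 1)
    (f : Fin kk → Fin n) (hf : Function.Injective f) :
    ∃ hB : ((1 : Matrix (Fin kk) (Fin kk) ℂ) -
        (Xt.submatrix id f)ᴴ * δM * Xt.submatrix id f).PosDef,
      specNorm (psqrt hB)⁻¹ ≤ Real.sqrt (1 - η) / Real.sqrt (1 - 2 * η) := by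
  set X₁ := Xt.submatrix id f
  have hX₁ : X₁ᴴ * (M + δM) * X₁ = 1 := by
    rw [conjTranspose_submatrix_mul_mul_submatrix, hXt, submatrix_one _ hf]
  have hB : 1 - X₁ᴴ * δM * X₁ = X₁ᴴ * M * X₁ := by
    rw [← hX₁, Matrix.mul_add, Matrix.add_mul]; abel
  have hinj : Function.Injective X₁.mulVec := Function.LeftInverse.injective
    (g := (X₁ᴴ * (M + δM)).mulVec) fun v => by rw [mulVec_mulVec, hX₁, one_mulVec]
  have hη0 : 0 ≤ η := hη ▸ norm_nonneg _
  refine ⟨hB ▸ hM.conjTranspose_mul_mul_same hinj, ?_⟩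
  refine (specNorm_inv_psqrt_le _ (by linarith) fun v => ?_).trans
    (sqrt_one_add_le_sqrt_one_sub_div_sqrt_one_sub_two_mul hη0 hhalf)
  calc (star v ⬝ᵥ v).re = (star (X₁ *ᵥ v) ⬝ᵥ (M + δM) *ᵥ (X₁ *ᵥ v)).re := by
        rw [← star_dotProduct_conjTranspose_mul_mul_mulVec, hX₁, one_mulVec]
    _ ≤ (1 + η) * (star (X₁ *ᵥ v) ⬝ᵥ M *ᵥ (X₁ *ᵥ v)).re :=
        hη ▸ re_star_dotProduct_add_mulVec_le hM δM _
    _ = (1 + η) * (star v ⬝ᵥ (1 - X₁ᴴ * δM * X₁) *ᵥ v).re := by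
        rw [hB, star_dotProduct_conjTranspose_mul_mul_mulVec]

theorem stmt_10 {n kk : ℕ} (M δM : Matrix (Fin n) (Fin n) ℂ)
    (hM : M.PosDef) (hδ : δM.IsHermitian) (hMt : (M + δM).PosDef)
    (η : ℝ) (hη : η = specNorm ((psqrt hM)⁻¹ * δM * (psqrt hM)⁻¹)) (hhalf : η < 1 / 2)
    (Xt : Matrix (Fin n) (Fin n) ℂ) (hXt : Xtᴴ * (M + δM) * Xt = 1)
    (f : Fin kk → Fin n) (hf : Function.Injective f) :
    ∃ hB : ((1 : Matrix (Fin kk) (Fin kk) ℂ) -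
        (Xt.submatrix id f)ᴴ * δM * Xt.submatrix id f).PosDef,
      specNorm (psqrt hB)⁻¹ ≤ Real.sqrt (1 - η) / Real.sqrt (1 - 2 * η) :=
  stmt_10_general M δM hM η hη hhalf Xt hXt f hf
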